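/- Set A_w equal to the 3×3 matrix with single nonzero entry (A_w)_{13} = (1/√2)e^{ψ/2}, and A_{w̄} = −η⁻¹ Ā_wᵗ η with η = diag(1,1,−1); set A_z to the matrix with entries (A_z)_{12} = (1/√2)e^{ψ/2}, (A_z)_{22} = −ψ_z/2, (A_z)_{23} = −Ue^{−ψ}, (A_z)_{33} = ψ_z/2 and rest zero, and A_{z̄} = −η⁻¹ Ā_zᵗ η. Then the equations D_z A_w = 0 and F_{zz̄} + [A_w, A_{w̄}] = 0 hold if and only if U is holomorphic (U_{z̄} = 0) and ψ satisfies ψ_{zz̄} + (1/2)e^ψ + |U|²e^{−2ψ} = 0. -/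

import Mathlib

/-- Wirtinger derivative `∂/∂z` of `f : ℂ → ℂ`. -/
noncomputable def wdz (f : ℂ → ℂ) (z : ℂ) : ℂ :=
  (1 / 2) * (fderiv ℝ f z 1 - Complex.I * fderiv ℝ f z Complex.I)

/-- Wirtinger derivative `∂/∂z̄`. -/
noncomputable def wdzb (f : ℂ → ℂ) (z : ℂ) : ℂ :=
  (1 / 2) * (fderiv ℝ f z 1 + Complex.I * fderiv ℝ f z Complex.I)

/-- Entrywise `∂/∂z` of a matrix-valued function. -/
noncomputable def wdzM (M : ℂ → Matrix (Fin 3) (Fin 3) ℂ) (z : ℂ) :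
    Matrix (Fin 3) (Fin 3) ℂ :=
  Matrix.of fun i j => wdz (fun w => M w i j) z

/-- Entrywise `∂/∂z̄` of a matrix-valued function. -/
noncomputable def wdzbM (M : ℂ → Matrix (Fin 3) (Fin 3) ℂ) (z : ℂ) :
    Matrix (Fin 3) (Fin 3) ℂ :=
  Matrix.of fun i j => wdzb (fun w => M w i j) z

section auxlemmas
variable {f h : ℂ → ℂ} {z : ℂ} {f' h' : ℂ →L[ℝ] ℂ}

private lemma wdz_eq (hf : HasFDerivAt f f' z) :
    wdz f z = (1 / 2) * (f' 1 - Complex.I * f' Complex.I) := by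
  rw [wdz, hf.fderiv]

private lemma wdzb_eq (hf : HasFDerivAt f f' z) :
    wdzb f z = (1 / 2) * (f' 1 + Complex.I * f' Complex.I) := by
  rw [wdzb, hf.fderiv]

private lemma wdz_congr (heq : f =ᶠ[nhds z] h) : wdz f z = wdz h z := by
  rw [wdz, wdz, heq.fderiv_eq]

private lemma wdz_const (c : ℂ) : wdz (fun _ => c) z = 0 := by
  simp [wdz, fderiv_const]

private lemma wdzb_const (c : ℂ) : wdzb (fun _ => c) z = 0 := by
  simp [wdzb, fderiv_const]

private lemma fderiv_conj_apply (hf : DifferentiableAt ℝ f z) (v : ℂ) :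
    fderiv ℝ (fun w => (starRingEnd ℂ) (f w)) z v = (starRingEnd ℂ) (fderiv ℝ f z v) := by
  have h1 : HasFDerivAt (fun w => (starRingEnd ℂ) (f w))
      ((Complex.conjCLE : ℂ →L[ℝ] ℂ).comp (fderiv ℝ f z)) z :=
    (Complex.conjCLE.toContinuousLinearMap.hasFDerivAt).comp z hf.hasFDerivAt
  rw [h1.fderiv]; rfl

private lemma diff_conj (hf : DifferentiableAt ℝ f z) :
    DifferentiableAt ℝ (fun w => (starRingEnd ℂ) (f w)) z :=
  ((Complex.conjCLE.toContinuousLinearMap.hasFDerivAt).comp z hf.hasFDerivAt).differentiableAt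

private lemma wdz_conj (hf : DifferentiableAt ℝ f z) :
    wdz (fun w => (starRingEnd ℂ) (f w)) z = (starRingEnd ℂ) (wdzb f z) := by
  rw [wdz, wdzb, fderiv_conj_apply hf, fderiv_conj_apply hf]
  simp only [map_mul, map_add, map_sub, map_one, map_div₀, map_ofNat, Complex.conj_I]
  ring

private lemma wdz_const_mul (hf : DifferentiableAt ℝ f z) (c : ℂ) :
    wdz (fun w => c * f w) z = c * wdz f z := by
  rw [wdz_eq (hf.hasFDerivAt.const_mul c), wdz]
  simp; ring

private lemma wdzb_const_mul (hf : DifferentiableAt ℝ f z) (c : ℂ) :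
    wdzb (fun w => c * f w) z = c * wdzb f z := by
  rw [wdzb_eq (hf.hasFDerivAt.const_mul c), wdzb]
  simp; ring

private lemma wdz_neg (hf : DifferentiableAt ℝ f z) :
    wdz (fun w => -(f w)) z = -(wdz f z) := by
  rw [wdz_eq (f := fun w => -(f w)) hf.hasFDerivAt.neg, wdz]; simp; ring

private lemma wdzb_neg (hf : DifferentiableAt ℝ f z) :
    wdzb (fun w => -(f w)) z = -(wdzb f z) := by
  rw [wdzb_eq (f := fun w => -(f w)) hf.hasFDerivAt.neg, wdzb]; simp; ring

private lemma wdz_div_const (hf : DifferentiableAt ℝ f z) (c : ℂ) :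
    wdz (fun w => f w / c) z = wdz f z / c := by
  have h1 : (fun w => f w / c) = fun w => c⁻¹ * f w := by funext w; rw [div_eq_inv_mul]
  rw [h1, wdz_const_mul hf, div_eq_inv_mul]

private lemma wdzb_div_const (hf : DifferentiableAt ℝ f z) (c : ℂ) :
    wdzb (fun w => f w / c) z = wdzb f z / c := by
  have h1 : (fun w => f w / c) = fun w => c⁻¹ * f w := by funext w; rw [div_eq_inv_mul]
  rw [h1, wdzb_const_mul hf, div_eq_inv_mul]

private lemma wdzb_mul (hf : DifferentiableAt ℝ f z) (hh : DifferentiableAt ℝ h z) :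
    wdzb (fun w => f w * h w) z = f z * wdzb h z + h z * wdzb f z := by
  rw [wdzb_eq (f := fun w => f w * h w) (hf.hasFDerivAt.mul hh.hasFDerivAt), wdzb, wdzb]; simp; ring

private lemma wdz_exp (hf : DifferentiableAt ℝ f z) :
    wdz (fun w => Complex.exp (f w)) z = Complex.exp (f z) * wdz f z := by
  rw [wdz_eq hf.hasFDerivAt.cexp, wdz]; simp; ring

private lemma wdzb_exp (hf : DifferentiableAt ℝ f z) :
    wdzb (fun w => Complex.exp (f w)) z = Complex.exp (f z) * wdzb f z := by
  rw [wdzb_eq hf.hasFDerivAt.cexp, wdzb]; simp; ring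

end auxlemmas

private lemma DifferentiableAt.div_const' {f : ℂ → ℂ} {z : ℂ}
    (hf : DifferentiableAt ℝ f z) (c : ℂ) :
    DifferentiableAt ℝ (fun w => f w / c) z := by
  simpa only [div_eq_mul_inv] using hf.mul_const c⁻¹

private lemma real_pack {Ω : Set ℂ} (hΩ : IsOpen Ω) {ψ : ℂ → ℝ}
    (hψ : ContDiffOn ℝ (⊤ : ℕ∞) (fun z => (ψ z : ℂ)) Ω) {z : ℂ} (hz : z ∈ Ω) :
    DifferentiableAt ℝ (fun w => (ψ w : ℂ)) z ∧
    DifferentiableAt ℝ (wdz (fun w => (ψ w : ℂ))) z ∧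
    (starRingEnd ℂ) (wdz (fun w => (ψ w : ℂ)) z) = wdzb (fun w => (ψ w : ℂ)) z ∧
    (starRingEnd ℂ) (wdzb (wdz (fun w => (ψ w : ℂ))) z)
      = wdzb (wdz (fun w => (ψ w : ℂ))) z := by
  set g : ℂ → ℂ := fun w => (ψ w : ℂ) with hg
  have hgc : ContDiffAt ℝ (⊤ : ℕ∞) g z := hψ.contDiffAt (hΩ.mem_nhds hz)
  have hgd : DifferentiableAt ℝ g z := hgc.differentiableAt (by simp)
  have hcg : (fun w => (starRingEnd ℂ) (g w)) = g := funext fun w => Complex.conj_ofReal _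
  have hreal : ∀ w ∈ Ω, ∀ v, (starRingEnd ℂ) (fderiv ℝ g w v) = fderiv ℝ g w v := by
    intro w hw v
    have hgdw : DifferentiableAt ℝ g w :=
      (hψ.contDiffAt (hΩ.mem_nhds hw)).differentiableAt (by simp)
    rw [← fderiv_conj_apply hgdw v, hcg]
  have hconjwdz : ∀ w ∈ Ω, (starRingEnd ℂ) (wdz g w) = wdzb g w := by
    intro w hw
    rw [wdz, wdzb]
    simp only [map_mul, map_sub, map_div₀, map_one, map_ofNat, Complex.conj_I,
      hreal w hw 1, hreal w hw Complex.I]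
    ring
  have hΦ : ContDiffAt ℝ (⊤ : ℕ∞) (fderiv ℝ g) z := hgc.fderiv_right (by simp)
  have hΦd : DifferentiableAt ℝ (fderiv ℝ g) z := hΦ.differentiableAt (by simp)
  set H : ℂ →L[ℝ] ℂ →L[ℝ] ℂ := fderiv ℝ (fderiv ℝ g) z with hH
  have key : ∀ v : ℂ, HasFDerivAt (fun w => fderiv ℝ g w v)
      ((ContinuousLinearMap.apply ℝ ℂ v).comp H) z :=
    fun v => ((ContinuousLinearMap.apply ℝ ℂ v).hasFDerivAt).comp z hΦd.hasFDerivAt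
  have hwdzg : wdz g
      = fun w => (1/2 : ℂ) * (fderiv ℝ g w 1 - Complex.I * fderiv ℝ g w Complex.I) := rfl
  have hwdzbg : wdzb g
      = fun w => (1/2 : ℂ) * (fderiv ℝ g w 1 + Complex.I * fderiv ℝ g w Complex.I) := rfl
  have hd1 : HasFDerivAt (wdz g)
      ((1/2 : ℂ) • (((ContinuousLinearMap.apply ℝ ℂ 1).comp H)
        - Complex.I • ((ContinuousLinearMap.apply ℝ ℂ Complex.I).comp H))) z := by
    rw [hwdzg]
    exact (((key 1).sub (((key Complex.I)).const_mul Complex.I))).const_mul (1/2 : ℂ)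
  have hd2 : HasFDerivAt (wdzb g)
      ((1/2 : ℂ) • (((ContinuousLinearMap.apply ℝ ℂ 1).comp H)
        + Complex.I • ((ContinuousLinearMap.apply ℝ ℂ Complex.I).comp H))) z := by
    rw [hwdzbg]
    exact (((key 1).add (((key Complex.I)).const_mul Complex.I))).const_mul (1/2 : ℂ)
  have hpd : DifferentiableAt ℝ (wdz g) z := hd1.differentiableAt
  have hsym : H 1 Complex.I = H Complex.I 1 := (hgc.isSymmSndFDerivAt (by rw [minSmoothness_of_isRCLikeNormedField]; exact WithTop.coe_le_coe.mpr (le_top : (2 : ℕ∞) ≤ ⊤))) 1 Complex.I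
  have heval1 : wdzb (wdz g) z = (1/2 : ℂ) *
      ((1/2 : ℂ) * (H 1 1 - Complex.I * H 1 Complex.I)
        + Complex.I * ((1/2 : ℂ) * (H Complex.I 1 - Complex.I * H Complex.I Complex.I))) := by
    rw [wdzb, hd1.fderiv]
    simp only [ContinuousLinearMap.smul_apply, ContinuousLinearMap.sub_apply,
      ContinuousLinearMap.add_apply, ContinuousLinearMap.comp_apply,
      ContinuousLinearMap.apply_apply, smul_eq_mul]
  have heval2 : wdz (wdzb g) z = (1/2 : ℂ) *
      ((1/2 : ℂ) * (H 1 1 + Complex.I * H 1 Complex.I)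
        - Complex.I * ((1/2 : ℂ) * (H Complex.I 1 + Complex.I * H Complex.I Complex.I))) := by
    rw [wdz, hd2.fderiv]
    simp only [ContinuousLinearMap.smul_apply, ContinuousLinearMap.sub_apply,
      ContinuousLinearMap.add_apply, ContinuousLinearMap.comp_apply,
      ContinuousLinearMap.apply_apply, smul_eq_mul]
  have hconjR : (starRingEnd ℂ) (wdzb (wdz g) z) = wdzb (wdz g) z := by
    have h1 : (starRingEnd ℂ) (wdzb (wdz g) z)
        = wdz (fun w => (starRingEnd ℂ) (wdz g w)) z := (wdz_conj hpd).symm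
    have h2 : (fun w => (starRingEnd ℂ) (wdz g w)) =ᶠ[nhds z] wdzb g := by
      filter_upwards [hΩ.mem_nhds hz] with w hw using hconjwdz w hw
    rw [h1, wdz_congr h2, heval1, heval2, hsym]
    ring
  exact ⟨hgd, hpd, hconjwdz z hz, hconjR⟩

set_option maxHeartbeats 2000000 in
/-- With `A_w` having single entry `(A_w)₁₃ = (1/√2)e^{ψ/2}`,
`A_{w̄} = −η⁻¹Ā_wᵗη`, `A_z` given by the affine-sphere ansatz and
`A_{z̄} = −η⁻¹Ā_zᵗη` (`η = diag(1,1,−1)`), the SU(2,1) Hitchin equations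
`D_z A_w = 0` and `F_{zz̄} + [A_w, A_{w̄}] = 0` hold on `Ω` iff `U` is
holomorphic (`U_{z̄} = 0`) and `ψ_{zz̄} + (1/2)e^ψ + |U|²e^{−2ψ} = 0` on `Ω`. -/
theorem stmt19 (Ω : Set ℂ) (hΩ : IsOpen Ω)
    (ψ : ℂ → ℝ) (U : ℂ → ℂ)
    (hψ : ContDiffOn ℝ (⊤ : ℕ∞) (fun z => (ψ z : ℂ)) Ω) (hUc : ContDiffOn ℝ (⊤ : ℕ∞) U Ω)
    (η : Matrix (Fin 3) (Fin 3) ℂ) (hη : η = !![1, 0, 0; 0, 1, 0; 0, 0, -1])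
    (Aw Awb Az Azb : ℂ → Matrix (Fin 3) (Fin 3) ℂ)
    (hAw : ∀ z, Aw z = !![0, 0, ((Real.sqrt 2 : ℂ))⁻¹ * Complex.exp ((ψ z : ℂ) / 2);
      0, 0, 0; 0, 0, 0])
    (hAwb : ∀ z, Awb z = -(η⁻¹ * (Aw z).conjTranspose * η))
    (hAz : ∀ z, Az z =
      !![0, ((Real.sqrt 2 : ℂ))⁻¹ * Complex.exp ((ψ z : ℂ) / 2), 0;
         0, -(wdz (fun w => (ψ w : ℂ)) z) / 2, -(U z) * Complex.exp (-(ψ z : ℂ));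
         0, 0, (wdz (fun w => (ψ w : ℂ)) z) / 2])
    (hAzb : ∀ z, Azb z = -(η⁻¹ * (Az z).conjTranspose * η)) :
    ((∀ z ∈ Ω, wdzM Aw z + (Az z * Aw z - Aw z * Az z) = 0) ∧
     (∀ z ∈ Ω, wdzM Azb z - wdzbM Az z + (Az z * Azb z - Azb z * Az z)
        + (Aw z * Awb z - Awb z * Aw z) = 0))
    ↔ (∀ z ∈ Ω, wdzb U z = 0 ∧
        wdzb (wdz fun w => (ψ w : ℂ)) z + (1 / 2) * Complex.exp (ψ z)
          + ((‖U z‖ : ℝ) : ℂ) ^ 2 * Complex.exp (-2 * ψ z) = 0) := by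
  have hηinv : η⁻¹ = η := by
    have h1 : η * η = 1 := by
      subst hη
      norm_num [Matrix.mul_fin_three, ← Matrix.one_fin_three]
    exact Matrix.inv_eq_right_inv h1
  -- explicit form of Awb
  have hAwb' : ∀ w, Awb w = !![0, 0, 0; 0, 0, 0;
      ((Real.sqrt 2 : ℂ))⁻¹ * Complex.exp ((ψ w : ℂ) / 2), 0, 0] := by
    intro w
    rw [hAwb, hAw, hηinv, hη]
    have hct : (!![0, 0, ((Real.sqrt 2 : ℂ))⁻¹ * Complex.exp ((ψ w : ℂ) / 2);
        0, 0, 0; 0, 0, 0]).conjTranspose =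
        !![0, 0, 0; 0, 0, 0;
          ((Real.sqrt 2 : ℂ))⁻¹ * Complex.exp ((ψ w : ℂ) / 2), 0, 0] := by
      ext i j
      fin_cases i <;> fin_cases j <;>
        simp [Matrix.conjTranspose_apply, ← Complex.exp_conj, map_div₀,
          Complex.conj_ofReal, map_ofNat, Matrix.vecHead, Matrix.vecTail, Function.comp]
    rw [hct]
    ext i j
    fin_cases i <;> fin_cases j <;> simp [Matrix.mul_fin_three, Matrix.vecHead, Matrix.vecTail] <;> ring_nf
  -- explicit form of Azb
  have hAzb' : ∀ w, Azb w = !![0, 0, 0;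
      -(((Real.sqrt 2 : ℂ))⁻¹ * Complex.exp ((ψ w : ℂ) / 2)),
        (starRingEnd ℂ) (wdz (fun w => (ψ w : ℂ)) w) / 2, 0;
      0, -((starRingEnd ℂ) (U w) * Complex.exp (-(ψ w : ℂ))),
        -((starRingEnd ℂ) (wdz (fun w => (ψ w : ℂ)) w) / 2)] := by
    intro w
    rw [hAzb, hAz, hηinv, hη]
    have hct : (!![0, ((Real.sqrt 2 : ℂ))⁻¹ * Complex.exp ((ψ w : ℂ) / 2), 0;
         0, -(wdz (fun w => (ψ w : ℂ)) w) / 2, -(U w) * Complex.exp (-(ψ w : ℂ));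
         0, 0, (wdz (fun w => (ψ w : ℂ)) w) / 2]).conjTranspose =
        !![0, 0, 0;
           ((Real.sqrt 2 : ℂ))⁻¹ * Complex.exp ((ψ w : ℂ) / 2),
             -(starRingEnd ℂ) (wdz (fun w => (ψ w : ℂ)) w) / 2, 0;
           0, -((starRingEnd ℂ) (U w) * Complex.exp (-(ψ w : ℂ))),
             (starRingEnd ℂ) (wdz (fun w => (ψ w : ℂ)) w) / 2] := by
      ext i j
      fin_cases i <;> fin_cases j <;>
        simp [Matrix.conjTranspose_apply, ← Complex.exp_conj, map_div₀,
          Complex.conj_ofReal, map_ofNat, neg_div, Matrix.vecHead, Matrix.vecTail,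
          Function.comp]
    rw [hct]
    ext i j
    fin_cases i <;> fin_cases j <;> simp [Matrix.mul_fin_three, Matrix.vecHead, Matrix.vecTail] <;> ring_nf
  -- scalar constants
  have h2c : ((Real.sqrt 2 : ℂ))⁻¹ * ((Real.sqrt 2 : ℂ))⁻¹ = 1/2 := by
    rw [← mul_inv, ← Complex.ofReal_mul, Real.mul_self_sqrt (by norm_num : (0:ℝ) ≤ 2)]
    norm_num
  have main : ∀ z ∈ Ω,
      (wdzM Aw z + (Az z * Aw z - Aw z * Az z) = 0) ∧
      ((wdzM Azb z - wdzbM Az z + (Az z * Azb z - Azb z * Az z)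
          + (Aw z * Awb z - Awb z * Aw z) = 0) ↔
        (wdzb U z = 0 ∧
          wdzb (wdz fun w => (ψ w : ℂ)) z + (1 / 2) * Complex.exp (ψ z)
            + ((‖U z‖ : ℝ) : ℂ) ^ 2 * Complex.exp (-2 * ψ z) = 0)) := by
    intro z hz
    obtain ⟨hgd, hpd, hPQ, hRr⟩ := real_pack hΩ hψ hz
    have hUd : DifferentiableAt ℝ U z :=
      (hUc.contDiffAt (hΩ.mem_nhds hz)).differentiableAt (by simp)
    have hexp2d : DifferentiableAt ℝ (fun w => Complex.exp ((ψ w : ℂ) / 2)) z :=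
      by
      have h := DifferentiableAt.div_const' hgd 2
      exact (h.hasFDerivAt.cexp (𝕜 := ℝ)).differentiableAt
    have hexpnd : DifferentiableAt ℝ (fun w => Complex.exp (-(ψ w : ℂ))) z :=
      by
      have h := hgd.neg
      exact (h.hasFDerivAt.cexp (𝕜 := ℝ)).differentiableAt
    have hUed : DifferentiableAt ℝ (fun w => U w * Complex.exp (-(ψ w : ℂ))) z :=
      hUd.mul hexpnd
    have hconjpd : DifferentiableAt ℝ
        (fun w => (starRingEnd ℂ) (wdz (fun w => (ψ w : ℂ)) w)) z := diff_conj hpd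
    -- derivative values
    have E1 : wdz (fun w => ((Real.sqrt 2 : ℂ))⁻¹ * Complex.exp ((ψ w : ℂ) / 2)) z
        = ((Real.sqrt 2 : ℂ))⁻¹ * Complex.exp ((ψ z : ℂ) / 2)
            * wdz (fun w => (ψ w : ℂ)) z / 2 := by
      rw [wdz_const_mul hexp2d, wdz_exp (DifferentiableAt.div_const' hgd 2), wdz_div_const hgd]; ring
    have E1b : wdzb (fun w => ((Real.sqrt 2 : ℂ))⁻¹ * Complex.exp ((ψ w : ℂ) / 2)) z
        = ((Real.sqrt 2 : ℂ))⁻¹ * Complex.exp ((ψ z : ℂ) / 2)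
            * (starRingEnd ℂ) (wdz (fun w => (ψ w : ℂ)) z) / 2 := by
      rw [wdzb_const_mul hexp2d, wdzb_exp (DifferentiableAt.div_const' hgd 2), wdzb_div_const hgd, ← hPQ]; ring
    have E6 : wdz (fun w => -(((Real.sqrt 2 : ℂ))⁻¹ * Complex.exp ((ψ w : ℂ) / 2))) z
        = -(((Real.sqrt 2 : ℂ))⁻¹ * Complex.exp ((ψ z : ℂ) / 2)
            * wdz (fun w => (ψ w : ℂ)) z / 2) := by
      rw [wdz_neg (hexp2d.const_mul _), E1]
    have E4 : wdz (fun w => (starRingEnd ℂ) (wdz (fun w => (ψ w : ℂ)) w) / 2) z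
        = wdzb (wdz fun w => (ψ w : ℂ)) z / 2 := by
      rw [wdz_div_const hconjpd, wdz_conj hpd, hRr]
    have E5 : wdz (fun w => -((starRingEnd ℂ) (wdz (fun w => (ψ w : ℂ)) w) / 2)) z
        = -(wdzb (wdz fun w => (ψ w : ℂ)) z / 2) := by
      rw [wdz_neg (DifferentiableAt.div_const' hconjpd 2), E4]
    have E2 : wdzb (fun w => -(wdz (fun w => (ψ w : ℂ)) w) / 2) z
        = -(wdzb (wdz fun w => (ψ w : ℂ)) z) / 2 := by
      rw [wdzb_div_const (f := fun w => -(wdz (fun w => (ψ w : ℂ)) w)) hpd.neg, wdzb_neg hpd]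
    have E3 : wdzb (fun w => (wdz (fun w => (ψ w : ℂ)) w) / 2) z
        = wdzb (wdz fun w => (ψ w : ℂ)) z / 2 := by
      rw [wdzb_div_const hpd]
    have E7 : wdzb (fun w => -(U w) * Complex.exp (-(ψ w : ℂ))) z
        = U z * Complex.exp (-(ψ z : ℂ)) * (starRingEnd ℂ) (wdz (fun w => (ψ w : ℂ)) z)
          - Complex.exp (-(ψ z : ℂ)) * wdzb U z := by
      rw [wdzb_mul (f := fun w => -(U w)) hUd.neg hexpnd, wdzb_exp (f := fun w => -(ψ w : ℂ)) hgd.neg, wdzb_neg hgd, wdzb_neg hUd, ← hPQ]; ring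
    have E8 : wdz (fun w => -((starRingEnd ℂ) (U w) * Complex.exp (-(ψ w : ℂ)))) z
        = (starRingEnd ℂ) (U z) * Complex.exp (-(ψ z : ℂ)) * wdz (fun w => (ψ w : ℂ)) z
          - Complex.exp (-(ψ z : ℂ)) * (starRingEnd ℂ) (wdzb U z) := by
      have hfe : (fun w => -((starRingEnd ℂ) (U w) * Complex.exp (-(ψ w : ℂ))))
          = fun w => -((starRingEnd ℂ) (U w * Complex.exp (-(ψ w : ℂ)))) := by
        funext w
        rw [map_mul, ← Complex.exp_conj, map_neg, Complex.conj_ofReal]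
      rw [hfe, wdz_neg (diff_conj hUed), wdz_conj hUed, wdzb_mul hUd hexpnd,
        wdzb_exp (f := fun w => -(ψ w : ℂ)) hgd.neg, wdzb_neg hgd, ← hPQ]
      simp only [map_mul, map_add, map_neg, Complex.conj_conj, ← Complex.exp_conj,
        Complex.conj_ofReal]
      ring
    -- entrywise derivatives of the matrices
    have W0 : wdzM Aw z = !![0, 0, ((Real.sqrt 2 : ℂ))⁻¹ * Complex.exp ((ψ z : ℂ) / 2)
          * wdz (fun w => (ψ w : ℂ)) z / 2; 0, 0, 0; 0, 0, 0] := by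
      ext i j
      fin_cases i <;> fin_cases j <;>
        simp only [wdzM, Matrix.of_apply, hAw, Matrix.cons_val', Matrix.cons_val_zero,
          Matrix.cons_val_one, Matrix.head_cons, Matrix.empty_val',
          Matrix.cons_val_fin_one, Matrix.head_fin_const, Matrix.cons_val_two,
          Matrix.tail_cons] <;>
        first
          | exact wdz_const 0
          | exact E1
    have W1 : wdzM Azb z = !![0, 0, 0;
        -(((Real.sqrt 2 : ℂ))⁻¹ * Complex.exp ((ψ z : ℂ) / 2)
            * wdz (fun w => (ψ w : ℂ)) z / 2),
          wdzb (wdz fun w => (ψ w : ℂ)) z / 2, 0;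
        0, (starRingEnd ℂ) (U z) * Complex.exp (-(ψ z : ℂ)) * wdz (fun w => (ψ w : ℂ)) z
            - Complex.exp (-(ψ z : ℂ)) * (starRingEnd ℂ) (wdzb U z),
          -(wdzb (wdz fun w => (ψ w : ℂ)) z / 2)] := by
      ext i j
      fin_cases i <;> fin_cases j <;>
        simp only [wdzM, Matrix.of_apply, hAzb', Matrix.cons_val', Matrix.cons_val_zero,
          Matrix.cons_val_one, Matrix.head_cons, Matrix.empty_val',
          Matrix.cons_val_fin_one, Matrix.head_fin_const, Matrix.cons_val_two,
          Matrix.tail_cons] <;>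
        first
          | exact wdz_const 0
          | exact E6
          | exact E4
          | exact E8
          | exact E5
    have W2 : wdzbM Az z = !![0,
        ((Real.sqrt 2 : ℂ))⁻¹ * Complex.exp ((ψ z : ℂ) / 2)
          * (starRingEnd ℂ) (wdz (fun w => (ψ w : ℂ)) z) / 2, 0;
        0, -(wdzb (wdz fun w => (ψ w : ℂ)) z) / 2,
          U z * Complex.exp (-(ψ z : ℂ)) * (starRingEnd ℂ) (wdz (fun w => (ψ w : ℂ)) z)
            - Complex.exp (-(ψ z : ℂ)) * wdzb U z;
        0, 0, wdzb (wdz fun w => (ψ w : ℂ)) z / 2] := by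
      ext i j
      fin_cases i <;> fin_cases j <;>
        simp only [wdzbM, Matrix.of_apply, hAz, Matrix.cons_val', Matrix.cons_val_zero,
          Matrix.cons_val_one, Matrix.head_cons, Matrix.empty_val',
          Matrix.cons_val_fin_one, Matrix.head_fin_const, Matrix.cons_val_two,
          Matrix.tail_cons] <;>
        first
          | exact wdzb_const 0
          | exact E1b
          | exact E2
          | exact E7
          | exact E3
    -- first Hitchin equation holds identically
    have heq1 : wdzM Aw z + (Az z * Aw z - Aw z * Az z) = 0 := by
      rw [W0, hAz z, hAw z]
      ext i j
      fin_cases i <;> fin_cases j <;>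
        simp [Matrix.mul_fin_three, Matrix.vecHead, Matrix.vecTail] <;> ring_nf
    -- the second equation reduces to an explicit matrix
    have hmat : wdzM Azb z - wdzbM Az z + (Az z * Azb z - Azb z * Az z)
        + (Aw z * Awb z - Awb z * Aw z) =
        !![0, 0, 0;
           0, wdzb (wdz fun w => (ψ w : ℂ)) z
                + (((Real.sqrt 2 : ℂ))⁻¹ * Complex.exp ((ψ z : ℂ) / 2))
                  * (((Real.sqrt 2 : ℂ))⁻¹ * Complex.exp ((ψ z : ℂ) / 2))
                + (U z * (starRingEnd ℂ) (U z))
                  * (Complex.exp (-(ψ z : ℂ)) * Complex.exp (-(ψ z : ℂ))),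
              Complex.exp (-(ψ z : ℂ)) * wdzb U z;
           0, -(Complex.exp (-(ψ z : ℂ)) * (starRingEnd ℂ) (wdzb U z)),
              -(wdzb (wdz fun w => (ψ w : ℂ)) z
                + (((Real.sqrt 2 : ℂ))⁻¹ * Complex.exp ((ψ z : ℂ) / 2))
                  * (((Real.sqrt 2 : ℂ))⁻¹ * Complex.exp ((ψ z : ℂ) / 2))
                + (U z * (starRingEnd ℂ) (U z))
                  * (Complex.exp (-(ψ z : ℂ)) * Complex.exp (-(ψ z : ℂ))))] := by
      rw [W1, W2, hAz z, hAzb' z, hAw z, hAwb' z]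
      ext i j
      fin_cases i <;> fin_cases j <;>
        simp [Matrix.mul_fin_three, Matrix.vecHead, Matrix.vecTail] <;> ring_nf
    refine ⟨heq1, ?_⟩
    rw [hmat]
    have habs : ((‖U z‖ : ℝ) : ℂ) ^ 2 = U z * (starRingEnd ℂ) (U z) := by
      rw [← Complex.ofReal_pow, Complex.sq_norm]
      exact (Complex.mul_conj _).symm
    have hee : Complex.exp ((ψ z : ℂ) / 2) * Complex.exp ((ψ z : ℂ) / 2)
        = Complex.exp (ψ z) := by
      rw [← Complex.exp_add]; norm_num
    have hE2 : Complex.exp (-(ψ z : ℂ)) * Complex.exp (-(ψ z : ℂ))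
        = Complex.exp (-2 * ψ z) := by
      rw [← Complex.exp_add]; congr 1; ring
    have hTeq : (wdzb (wdz fun w => (ψ w : ℂ)) z
          + (((Real.sqrt 2 : ℂ))⁻¹ * Complex.exp ((ψ z : ℂ) / 2))
            * (((Real.sqrt 2 : ℂ))⁻¹ * Complex.exp ((ψ z : ℂ) / 2))
          + (U z * (starRingEnd ℂ) (U z))
            * (Complex.exp (-(ψ z : ℂ)) * Complex.exp (-(ψ z : ℂ))))
        = wdzb (wdz fun w => (ψ w : ℂ)) z + (1 / 2) * Complex.exp (ψ z)
          + ((‖U z‖ : ℝ) : ℂ) ^ 2 * Complex.exp (-2 * ψ z) := by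
      rw [habs, hE2, show (((Real.sqrt 2 : ℂ))⁻¹ * Complex.exp ((ψ z : ℂ) / 2))
          * (((Real.sqrt 2 : ℂ))⁻¹ * Complex.exp ((ψ z : ℂ) / 2))
          = (((Real.sqrt 2 : ℂ))⁻¹ * ((Real.sqrt 2 : ℂ))⁻¹)
            * (Complex.exp ((ψ z : ℂ) / 2) * Complex.exp ((ψ z : ℂ) / 2)) from by ring,
        h2c, hee]
    constructor
    · intro h
      have h12 : Complex.exp (-(ψ z : ℂ)) * wdzb U z = 0 := by
        have h' := congrFun (congrFun h 1) 2
        simpa using h'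
      have hV : wdzb U z = 0 := by
        rcases mul_eq_zero.mp h12 with h' | h'
        · exact absurd h' (Complex.exp_ne_zero _)
        · exact h'
      have h11 := congrFun (congrFun h 1) 1
      refine ⟨hV, ?_⟩
      rw [← hTeq]
      simpa using h11
    · rintro ⟨hV, hT⟩
      have hT0 : (wdzb (wdz fun w => (ψ w : ℂ)) z
          + (((Real.sqrt 2 : ℂ))⁻¹ * Complex.exp ((ψ z : ℂ) / 2))
            * (((Real.sqrt 2 : ℂ))⁻¹ * Complex.exp ((ψ z : ℂ) / 2))
          + (U z * (starRingEnd ℂ) (U z))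
            * (Complex.exp (-(ψ z : ℂ)) * Complex.exp (-(ψ z : ℂ)))) = 0 := by rw [hTeq]; exact hT
      have hVc : (starRingEnd ℂ) (wdzb U z) = 0 := by rw [hV, map_zero]
      ext i j
      fin_cases i <;> fin_cases j <;>
        simp [hV, hVc, hT0, Matrix.vecHead, Matrix.vecTail]
  constructor
  · rintro ⟨_, h2⟩ z hz
    exact ((main z hz).2).mp (h2 z hz)
  · intro h
    exact ⟨fun z hz => (main z hz).1, fun z hz => ((main z hz).2).mpr (h z hz)⟩
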